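/- Let d ≥ 2 and let P = (1/2)(1 − F) be the projector onto the antisymmetric subspace of ℂ^d ⊗ ℂ^d, where F is the swap matrix. For every separable density matrix σ on ℂ^d ⊗ ℂ^d whose overlap t = Re Tr(P·σ) is strictly positive, one has −log t ≥ log √(4/3), where log denotes the (natural) real logarithm. In other words, the 0-relative entropy D₀(γ_d‖σ) = −log Tr(P_{γ_d} σ) of the totally antisymmetric state relative to any separable state is bounded below by the constant log √(4/3). -/

import Mathlib

open Matrix Kronecker ComplexOrder

/-- The swap matrix on `ℂ^d ⊗ ℂ^d`, with entries `F[(i,j),(k,l)] = δ_{il}·δ_{jk}`. -/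
noncomputable def swapMat (d : ℕ) : Matrix (Fin d × Fin d) (Fin d × Fin d) ℂ :=
  fun p q => (if p.1 = q.2 then 1 else 0) * (if p.2 = q.1 then 1 else 0)

/-- The projector onto the antisymmetric subspace of `ℂ^d ⊗ ℂ^d`: `P = (1/2)(1 - F)`. -/
noncomputable def antiProj (d : ℕ) : Matrix (Fin d × Fin d) (Fin d × Fin d) ℂ :=
  (1 / 2 : ℂ) • ((1 : Matrix (Fin d × Fin d) (Fin d × Fin d) ℂ) - swapMat d)

/-- A density matrix: positive semidefinite with trace 1. -/
def IsDensityMatrix {ι : Type} [Fintype ι] [DecidableEq ι] (ρ : Matrix ι ι ℂ) : Prop :=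
  ρ.PosSemidef ∧ ρ.trace = 1

/-- A separable state on a bipartite system `ι ⊗ ι`: a finite convex combination of
Kronecker products of density matrices. -/
def IsSeparableState {ι : Type} [Fintype ι] [DecidableEq ι]
    (σ : Matrix (ι × ι) (ι × ι) ℂ) : Prop :=
  ∃ (m : ℕ) (p : Fin m → ℝ) (ρ τ : Fin m → Matrix ι ι ℂ),
    (∀ j, 0 ≤ p j) ∧ (∑ j, p j = 1) ∧
    (∀ j, IsDensityMatrix (ρ j)) ∧ (∀ j, IsDensityMatrix (τ j)) ∧
    σ = ∑ j, (p j : ℂ) • (ρ j ⊗ₖ τ j)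

/-!
The swap operator has expectation `Tr(F (ρ ⊗ τ)) = Tr(ρ τ) ≥ 0` in every product state, hence
`Tr(F σ) ≥ 0` for every separable `σ`. Therefore `Tr(P σ) = (1 - Tr(F σ)) / 2 ≤ 1 / 2`, so
`-log Tr(P σ) ≥ log 2`, which exceeds `log √(4/3)`.
-/

lemma Matrix.PosSemidef.trace_mul_nonneg {𝕜 n : Type*} [RCLike 𝕜] [Fintype n] [DecidableEq n]
    {A B : Matrix n n 𝕜} (hA : A.PosSemidef) (hB : B.PosSemidef) : 0 ≤ (A * B).trace := by
  obtain ⟨C, rfl⟩ : ∃ C : Matrix n n 𝕜, B = star C * C := by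
    -- the C⋆-algebra structure on matrices is the one of the L2 operator norm
    open scoped MatrixOrder Matrix.Norms.L2Operator in
    exact CStarAlgebra.nonneg_iff_eq_star_mul_self.mp hB.nonneg
  rw [star_eq_conjTranspose, ← Matrix.mul_assoc, trace_mul_cycle]
  exact (hA.mul_mul_conjTranspose_same C).trace_nonneg

lemma trace_swapMat_mul_kronecker {d : ℕ} (ρ τ : Matrix (Fin d) (Fin d) ℂ) :
    (swapMat d * (ρ ⊗ₖ τ)).trace = (ρ * τ).trace := by
  simp only [trace, diag_apply, Matrix.mul_apply, swapMat, mul_ite, mul_one, mul_zero,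
    kroneckerMap_apply, ite_mul, one_mul, zero_mul, Fintype.sum_prod_type, Finset.sum_ite_irrel,
    Finset.sum_ite_eq, Finset.mem_univ, ↓reduceIte, Finset.sum_const_zero]
  exact Finset.sum_comm

lemma IsSeparableState.trace_swapMat_mul_nonneg {d : ℕ}
    {σ : Matrix (Fin d × Fin d) (Fin d × Fin d) ℂ} (hσ : IsSeparableState σ) :
    0 ≤ (swapMat d * σ).trace := by
  obtain ⟨m, p, ρ, τ, hp, -, hρ, hτ, rfl⟩ := hσ
  simp only [Matrix.mul_sum, Matrix.mul_smul, trace_sum, trace_smul, trace_swapMat_mul_kronecker,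
    smul_eq_mul]
  exact Finset.sum_nonneg fun j _ ↦
    mul_nonneg (Complex.zero_le_real.mpr (hp j)) ((hρ j).1.trace_mul_nonneg (hτ j).1)

lemma trace_antiProj_mul {d : ℕ} (σ : Matrix (Fin d × Fin d) (Fin d × Fin d) ℂ) :
    (antiProj d * σ).trace = (σ.trace - (swapMat d * σ).trace) / 2 := by
  rw [antiProj, smul_mul, trace_smul, Matrix.sub_mul, Matrix.one_mul, trace_sub, smul_eq_mul]
  ring

theorem zero_relative_entropy_antisymmetric_ge_general (d : ℕ)
    (σ : Matrix (Fin d × Fin d) (Fin d × Fin d) ℂ)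
    (hσ : IsDensityMatrix σ) (hsep : IsSeparableState σ)
    (t : ℝ) (ht : t = ((antiProj d * σ).trace).re) (htpos : 0 < t) :
    -Real.log t ≥ Real.log (Real.sqrt (4 / 3)) := by
  have hswap := (Complex.nonneg_iff.mp hsep.trace_swapMat_mul_nonneg).1
  have ht_le : t ≤ 1 / 2 := by
    rw [ht, trace_antiProj_mul, hσ.2]
    simp only [Complex.div_ofNat_re, Complex.sub_re, Complex.one_re]
    linarith
  calc Real.log (Real.sqrt (4 / 3)) ≤ Real.log 2 :=
        Real.log_le_log (by positivity) (Real.sqrt_le_iff.mpr ⟨by norm_num, by norm_num⟩)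
    _ = -Real.log (1 / 2) := by rw [one_div, Real.log_inv, neg_neg]
    _ ≤ -Real.log t := neg_le_neg (Real.log_le_log htpos ht_le)

/-- For every separable density matrix `σ` on `ℂ^d ⊗ ℂ^d` (`d ≥ 2`) whose overlap
`t = Re Tr(P·σ)` with the antisymmetric projector is strictly positive, the
0-relative entropy `D₀(γ_d‖σ) = −log Tr(P σ)` is bounded below by `log √(4/3)`. -/
theorem zero_relative_entropy_antisymmetric_ge (d : ℕ) (hd : 2 ≤ d)
    (σ : Matrix (Fin d × Fin d) (Fin d × Fin d) ℂ)
    (hσ : IsDensityMatrix σ) (hsep : IsSeparableState σ)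
    (t : ℝ) (ht : t = ((antiProj d * σ).trace).re) (htpos : 0 < t) :
    -Real.log t ≥ Real.log (Real.sqrt (4 / 3)) :=
  zero_relative_entropy_antisymmetric_ge_general d σ hσ hsep t ht htpos
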